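/- arXiv:2312.14416 — 2 statements merged into one kernel-verified Lean document; each statement's English description precedes it below -/
import Mathlib

section
/- Let X = X* + E, where X*, E ∈ ℝ^{m×n} and X* has rank at most r. Let X_r ∈ ℝ^{m×n} be a best rank-r approximation of X in spectral norm, i.e., X_r has rank at most r and ‖X − X_r‖_op ≤ ‖X − M‖_op for every matrix M ∈ ℝ^{m×n} of rank at most r (in particular, the top-r SVD truncation of X has this property). Then ‖X_r − X*‖_F ≤ 2√(2r)·‖E‖_op. -/
open scoped BigOperators
open Matrix MeasureTheory

noncomputable section

/-- Euclidean (ℓ₂) norm of a finitely-indexed real vector. -/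
def enorm2 {ι : Type*} [Fintype ι] (v : ι → ℝ) : ℝ := Real.sqrt (∑ i, v i ^ 2)

/-- Normalize a vector to unit ℓ₂ norm (junk value `0` if `v = 0`). -/
def unitize {ι : Type*} [Fintype ι] (v : ι → ℝ) : ι → ℝ := (enorm2 v)⁻¹ • v

/-- `sin θ` distance between two unit vectors: `√(1 − ⟨a,b⟩²)`. -/
def sinTheta {ι : Type*} [Fintype ι] (a b : ι → ℝ) : ℝ :=
  Real.sqrt (1 - (∑ i, a i * b i) ^ 2)

/-- A matrix has orthonormal columns: `Vᵀ V = I`. -/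
def Orth {p r : ℕ} (V : Matrix (Fin p) (Fin r) ℝ) : Prop := Vᵀ * V = 1

/-- Smallest singular value of a square matrix: `inf_{‖v‖=1} ‖Mv‖`. -/
def smallestSV {r : ℕ} (M : Matrix (Fin r) (Fin r) ℝ) : ℝ :=
  sInf {x | ∃ v : Fin r → ℝ, enorm2 v = 1 ∧ x = enorm2 (M.mulVec v)}

/-- `‖sinΘ(V₁, V₂)‖_op = √(1 − σ_r(V₁ᵀV₂)²)` for frames with orthonormal columns. -/
def sinThetaOp {p r : ℕ} (V₁ V₂ : Matrix (Fin p) (Fin r) ℝ) : ℝ :=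
  Real.sqrt (1 - smallestSV (V₁ᵀ * V₂) ^ 2)

/-- Matrix spectral (operator) norm. -/
def mOpNorm {ι κ : Type*} [Fintype ι] [Fintype κ] (M : Matrix ι κ ℝ) : ℝ :=
  sSup {x | ∃ v : κ → ℝ, enorm2 v = 1 ∧ x = enorm2 (M.mulVec v)}

/-- Matrix Frobenius norm. -/
def frobNorm {ι κ : Type*} [Fintype ι] [Fintype κ] (M : Matrix ι κ ℝ) : ℝ :=
  Real.sqrt (∑ i, ∑ j, M i j ^ 2)

/-- Operator norm of a third-order tensor. -/
def tOpNorm {p q N : ℕ} (T : Fin p → Fin q → Fin N → ℝ) : ℝ :=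
  sSup {x | ∃ (v : Fin p → ℝ) (w : Fin q → ℝ) (z : Fin N → ℝ),
    enorm2 v = 1 ∧ enorm2 w = 1 ∧ enorm2 z = 1 ∧
    x = ∑ i, ∑ j, ∑ k, T i j k * v i * w j * z k}

/-- A tensor in `ℝ^{p×p×N}` is semi-symmetric if every tslice is a symmetric matrix. -/
def SemiSym {p N : ℕ} (T : Fin p → Fin p → Fin N → ℝ) : Prop := ∀ i j k, T i j k = T j i k

/-- The k-th tslice `T_{:,:,k}` of a tensor. -/
def tslice {p q N : ℕ} (T : Fin p → Fin q → Fin N → ℝ) (k : Fin N) : Matrix (Fin p) (Fin q) ℝ :=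
  Matrix.of fun i j => T i j k

/-- Mode-3 contraction `T ×₃ u`. -/
def mode3 {p q N : ℕ} (T : Fin p → Fin q → Fin N → ℝ) (u : Fin N → ℝ) :
    Matrix (Fin p) (Fin q) ℝ :=
  Matrix.of fun i j => ∑ k, T i j k * u k

/-- Trace product `[T; V] ∈ ℝ^N`, with k-th entry `Tr(Vᵀ T_{:,:,k} V)`. -/
def traceProd {p N r : ℕ} (T : Fin p → Fin p → Fin N → ℝ) (V : Matrix (Fin p) (Fin r) ℝ) :
    Fin N → ℝ :=
  fun k => Matrix.trace (Vᵀ * tslice T k * V)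

/-- Weighted trace product `[T; V, D] ∈ ℝ^N`, with k-th entry `Tr(D Vᵀ T_{:,:,k} V)`. -/
def traceProdD {p N r : ℕ} (T : Fin p → Fin p → Fin N → ℝ) (V : Matrix (Fin p) (Fin r) ℝ)
    (D : Matrix (Fin r) (Fin r) ℝ) : Fin N → ℝ :=
  fun k => Matrix.trace (D * (Vᵀ * tslice T k * V))

/-- `V` is a matrix of left singular vectors of `A` associated with its `r` largest singular
values: `V` has orthonormal columns, each column is an eigenvector of `AAᵀ`, and the
corresponding eigenvalues dominate the Rayleigh quotient of `AAᵀ` on the orthogonal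
complement of the column span. -/
def IsLeadingLeft {ι κ : Type*} [Fintype ι] [Fintype κ] {r : ℕ}
    (A : Matrix ι κ ℝ) (V : Matrix ι (Fin r) ℝ) : Prop :=
  Vᵀ * V = 1 ∧ ∃ μ : Fin r → ℝ,
    (∀ i, (A * Aᵀ).mulVec (fun j => V j i) = μ i • fun j => V j i) ∧
    ∀ i, ∀ x : ι → ℝ, (∀ l, (∑ j, x j * V j l) = 0) →
      ∑ j, x j * (A * Aᵀ).mulVec x j ≤ μ i * ∑ j, x j ^ 2

/-- `v` is a leading (unit) left singular vector of `A`. -/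
def IsLeadingLeftVec {ι κ : Type*} [Fintype ι] [Fintype κ]
    (A : Matrix ι κ ℝ) (v : ι → ℝ) : Prop :=
  enorm2 v = 1 ∧ ∃ μ : ℝ,
    (A * Aᵀ).mulVec v = μ • v ∧
    ∀ x : ι → ℝ, (∑ j, x j * v j) = 0 →
      ∑ j, x j * (A * Aᵀ).mulVec x j ≤ μ * ∑ j, x j ^ 2

/-- The single-factor JisstPCA iteration (Algorithm 1): given `u⁽ᵗ⁾`, take `V⁽ᵗ⁺¹⁾`/`W⁽ᵗ⁺¹⁾`
to be leading singular vectors of the mode-3 contractions, then update `u⁽ᵗ⁺¹⁾` as the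
normalized weighted combination of trace products. -/
def JisstIter {p q N rx ry : ℕ} (X : Fin p → Fin p → Fin N → ℝ) (Y : Fin q → Fin q → Fin N → ℝ)
    (lam : ℝ) (u : ℕ → Fin N → ℝ) (V : ℕ → Matrix (Fin p) (Fin rx) ℝ)
    (W : ℕ → Matrix (Fin q) (Fin ry) ℝ) : Prop :=
  ∀ t : ℕ,
    IsLeadingLeft (mode3 X (u t)) (V (t + 1)) ∧
    IsLeadingLeft (mode3 Y (u t)) (W (t + 1)) ∧
    u (t + 1) =
      unitize (fun k => lam * traceProd X (V (t + 1)) k + (1 - lam) * traceProd Y (W (t + 1)) k)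

/-- The generalized single-factor JisstPCA iteration (Algorithm 6), with diagonal-core
updates `D⁽ᵗ⁺¹⁾ = Vᵀ(𝒳×₃u)V` used to weight the trace products. -/
def GJisstIter {p q N rx ry : ℕ} (X : Fin p → Fin p → Fin N → ℝ) (Y : Fin q → Fin q → Fin N → ℝ)
    (lam : ℝ) (u : ℕ → Fin N → ℝ) (V : ℕ → Matrix (Fin p) (Fin rx) ℝ)
    (W : ℕ → Matrix (Fin q) (Fin ry) ℝ) : Prop :=
  ∀ t : ℕ,
    IsLeadingLeft (mode3 X (u t)) (V (t + 1)) ∧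
    IsLeadingLeft (mode3 Y (u t)) (W (t + 1)) ∧
    u (t + 1) =
      unitize (fun k =>
        lam * traceProdD X (V (t + 1)) ((V (t + 1))ᵀ * mode3 X (u t) * V (t + 1)) k +
        (1 - lam) * traceProdD Y (W (t + 1)) ((W (t + 1))ᵀ * mode3 Y (u t) * W (t + 1)) k)

/-- Integrated noise norm `‖λℰ_x; (1−λ)ℰ_y‖_{r_x,r_y,op}`. -/
def intNoiseNorm {p q N : ℕ} (lam : ℝ) (rx ry : ℕ) (Ex : Fin p → Fin p → Fin N → ℝ)
    (Ey : Fin q → Fin q → Fin N → ℝ) : ℝ :=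
  sSup {x | ∃ (V : Matrix (Fin p) (Fin rx) ℝ) (W : Matrix (Fin q) (Fin ry) ℝ),
    Orth V ∧ Orth W ∧
    x = enorm2 (fun k => lam * traceProd Ex V k + (1 - lam) * traceProd Ey W k)}

/-- The column-concatenated matricization `[λ𝓜₃(𝒳), (1−λ)𝓜₃(𝒴)] ∈ ℝ^{N×(p²+q²)}`. -/
def concatMat3 {p q N : ℕ} (lam : ℝ) (X : Fin p → Fin p → Fin N → ℝ)
    (Y : Fin q → Fin q → Fin N → ℝ) :
    Matrix (Fin N) ((Fin p × Fin p) ⊕ (Fin q × Fin q)) ℝ :=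
  Matrix.of fun k => Sum.elim (fun ij => lam * X ij.1 ij.2 k) (fun ij => (1 - lam) * Y ij.1 ij.2 k)

/-- A real random variable is zero-mean and sub-Gaussian with parameter `σ`. -/
def SubGZero {Ω : Type*} [MeasurableSpace Ω] (μ : Measure Ω) (σ : ℝ) (f : Ω → ℝ) : Prop :=
  (∫ ω, f ω ∂μ) = 0 ∧ ∀ t : ℝ, (∫ ω, Real.exp (t * f ω) ∂μ) ≤ Real.exp (t ^ 2 * σ ^ 2 / 2)

/-- The family of on-and-above-diagonal entries of the two random noise tensors. -/
def upperFam {Ω : Type*} {p q N : ℕ} (Ex : Ω → Fin p → Fin p → Fin N → ℝ)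
    (Ey : Ω → Fin q → Fin q → Fin N → ℝ) :
    (({ij : Fin p × Fin p // ij.1 ≤ ij.2} × Fin N) ⊕
      ({ij : Fin q × Fin q // ij.1 ≤ ij.2} × Fin N)) → Ω → ℝ
  | Sum.inl x => fun ω => Ex ω x.1.1.1 x.1.1.2 x.2
  | Sum.inr x => fun ω => Ey ω x.1.1.1 x.1.1.2 x.2

/-- Sub-Gaussian noise assumption (Assumption 3.3): both noise tensors are semi-symmetric,
their on-and-above-diagonal entries are jointly independent, zero-mean, sub-Gaussian-σ, and
the tslice-wise sums of entrywise variances do not depend on the tslice. -/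
def SubGaussianNoise {Ω : Type*} [MeasurableSpace Ω] (μ : Measure Ω) {p q N : ℕ} (σ : ℝ)
    (Ex : Ω → Fin p → Fin p → Fin N → ℝ) (Ey : Ω → Fin q → Fin q → Fin N → ℝ) : Prop :=
  (∀ ω, SemiSym (Ex ω)) ∧ (∀ ω, SemiSym (Ey ω)) ∧
  (∀ i j k, Measurable fun ω => Ex ω i j k) ∧
  (∀ i j k, Measurable fun ω => Ey ω i j k) ∧
  (∀ i j k, SubGZero μ σ fun ω => Ex ω i j k) ∧
  (∀ i j k, SubGZero μ σ fun ω => Ey ω i j k) ∧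
  ProbabilityTheory.iIndepFun (upperFam Ex Ey) μ ∧
  (∀ k k' : Fin N, (∑ i, ∑ j, ∫ ω, (Ex ω i j k) ^ 2 ∂μ) = ∑ i, ∑ j, ∫ ω, (Ex ω i j k') ^ 2 ∂μ) ∧
  (∀ k k' : Fin N, (∑ i, ∑ j, ∫ ω, (Ey ω i j k) ^ 2 ∂μ) = ∑ i, ∑ j, ∫ ω, (Ey ω i j k') ^ 2 ∂μ)

/-! Since `Xs` is itself a rank-`r` candidate, optimality of `Xr` gives `‖Xs + E - Xr‖ ≤ ‖E‖`,
hence `‖Xr - Xs‖ ≤ ‖E‖ + ‖Xs + E - Xr‖ ≤ 2‖E‖` in operator norm. The difference has rank at most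
`2r`, and for any matrix `A`, `‖A‖_F² = tr(AᵀA)` is the sum of the `rank A` nonzero eigenvalues of
`AᵀA`, each at most `‖AᵀA‖ = ‖A‖²`; so `‖A‖_F ≤ √(rank A) ‖A‖`. -/

open scoped Matrix.Norms.L2Operator

lemma enorm2_eq_norm {ι : Type*} [Fintype ι] (v : ι → ℝ) : enorm2 v = ‖WithLp.toLp 2 v‖ := by
  simp [enorm2, EuclideanSpace.norm_eq]

lemma mOpNorm_eq_l2_opNorm {ι κ : Type*} [Fintype ι] [Fintype κ] [DecidableEq κ]
    (A : Matrix ι κ ℝ) : mOpNorm A = ‖A‖ := by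
  rw [l2_opNorm_def, ← ContinuousLinearMap.sSup_sphere_eq_norm]
  refine congrArg sSup (Set.ext fun x => ⟨?_, ?_⟩)
  · rintro ⟨v, hv, rfl⟩
    exact ⟨WithLp.toLp 2 v, by simpa [← enorm2_eq_norm], by simp [enorm2_eq_norm]⟩
  · rintro ⟨w, hw, rfl⟩
    exact ⟨w.ofLp, by simpa [enorm2_eq_norm] using hw, by rw [enorm2_eq_norm]; rfl⟩

lemma Matrix.rank_sub_le {R ι κ : Type*} [Field R] [Fintype κ] (A B : Matrix ι κ R) :
    (A - B).rank ≤ A.rank + B.rank := by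
  have hrange : LinearMap.range (A - B).mulVecLin ≤
      LinearMap.range A.mulVecLin ⊔ LinearMap.range B.mulVecLin := by
    rintro _ ⟨v, rfl⟩
    exact Submodule.mem_sup.2 ⟨A *ᵥ v, ⟨v, rfl⟩, -(B *ᵥ v), neg_mem ⟨v, rfl⟩,
      by simp [sub_eq_add_neg]⟩
  exact (Submodule.finrank_mono hrange).trans (Submodule.finrank_add_le_finrank_add_finrank _ _)

lemma Matrix.IsHermitian.eigenvalues_le_l2_opNorm {𝕜 n : Type*} [RCLike 𝕜] [Fintype n]
    [DecidableEq n] {B : Matrix n n 𝕜} (hB : B.IsHermitian) (i : n) : hB.eigenvalues i ≤ ‖B‖ := by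
  have h := B.l2_opNorm_mulVec (hB.eigenvectorBasis i)
  simp only [hB.mulVec_eigenvectorBasis, PiLp.continuousLinearEquiv_symm_apply,
    WithLp.toLp_smul, WithLp.toLp_ofLp, norm_smul, hB.eigenvectorBasis.orthonormal.1 i, mul_one,
    Real.norm_eq_abs] at h
  exact (le_abs_self _).trans h

lemma Matrix.IsHermitian.trace_le_rank_mul {n : Type*} [Fintype n] [DecidableEq n]
    {B : Matrix n n ℝ} (hB : B.IsHermitian) {c : ℝ} (hc : ∀ i, hB.eigenvalues i ≤ c) :
    B.trace ≤ B.rank * c := by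
  rw [hB.trace_eq_sum_eigenvalues, hB.rank_eq_card_non_zero_eigs, Fintype.card_subtype]
  simp only [RCLike.ofReal_real_eq_id, id]
  rw [← Finset.sum_filter_ne_zero, ← nsmul_eq_mul]
  exact Finset.sum_le_card_nsmul _ _ _ fun i _ => hc i

lemma frobNorm_eq_sqrt_trace {ι κ : Type*} [Fintype ι] [Fintype κ] (A : Matrix ι κ ℝ) :
    frobNorm A = √(Aᵀ * A).trace := by
  rw [frobNorm, Matrix.trace, Finset.sum_comm]
  simp [Matrix.mul_apply, sq]

lemma frobNorm_le_sqrt_rank_mul_l2_opNorm {ι κ : Type*} [Fintype ι] [Fintype κ] [DecidableEq κ]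
    (A : Matrix ι κ ℝ) : frobNorm A ≤ √A.rank * ‖A‖ := by
  have hB : (Aᵀ * A).IsHermitian := by
    simpa using Matrix.isHermitian_conjTranspose_mul_self A
  have htrace : (Aᵀ * A).trace ≤ A.rank * ‖A‖ ^ 2 := by
    have hnorm : ‖Aᵀ * A‖ = ‖A‖ ^ 2 := by
      simpa [sq] using Matrix.l2_opNorm_conjTranspose_mul_self A
    rw [← hnorm, ← Matrix.rank_transpose_mul_self]
    exact hB.trace_le_rank_mul hB.eigenvalues_le_l2_opNorm
  calc frobNorm A = √(Aᵀ * A).trace := frobNorm_eq_sqrt_trace A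
    _ ≤ √(A.rank * ‖A‖ ^ 2) := Real.sqrt_le_sqrt htrace
    _ = √A.rank * ‖A‖ := by rw [Real.sqrt_mul (Nat.cast_nonneg _), Real.sqrt_sq (norm_nonneg _)]

/-- Lemma B.1: Frobenius error of a best rank-`r` approximation of a perturbed
rank-`r` matrix. -/
theorem best_rank_r_approx_frobenius_error {m n r : ℕ}
    (Xs E : Matrix (Fin m) (Fin n) ℝ) (hrank : Xs.rank ≤ r)
    (Xr : Matrix (Fin m) (Fin n) ℝ) (hXr : Xr.rank ≤ r)
    (hbest : ∀ M : Matrix (Fin m) (Fin n) ℝ, M.rank ≤ r →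
      mOpNorm (Xs + E - Xr) ≤ mOpNorm (Xs + E - M)) :
    frobNorm (Xr - Xs) ≤ 2 * Real.sqrt (2 * (r : ℝ)) * mOpNorm E := by
  simp only [mOpNorm_eq_l2_opNorm] at hbest ⊢
  have hresidual : ‖Xs + E - Xr‖ ≤ ‖E‖ := by simpa using hbest Xs hrank
  have hop : ‖Xr - Xs‖ ≤ 2 * ‖E‖ := by
    calc ‖Xr - Xs‖ = ‖E - (Xs + E - Xr)‖ := by congr 1; abel
      _ ≤ ‖E‖ + ‖Xs + E - Xr‖ := norm_sub_le _ _
      _ ≤ 2 * ‖E‖ := by linarith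
  have hrk : ((Xr - Xs).rank : ℝ) ≤ 2 * r := by
    exact_mod_cast (Matrix.rank_sub_le Xr Xs).trans (by omega)
  calc frobNorm (Xr - Xs) ≤ √(Xr - Xs).rank * ‖Xr - Xs‖ :=
        frobNorm_le_sqrt_rank_mul_l2_opNorm _
    _ ≤ √(2 * r) * (2 * ‖E‖) := by gcongr
    _ = 2 * √(2 * r) * ‖E‖ := by ring

end
end

section
/- Let ℰ ∈ ℝ^{p×p×N} be a third-order tensor, V ∈ O_{p,r}, and D ∈ ℝ^{r×r} a diagonal matrix. Then the weighted trace-product vector [ℰ; V, D] ∈ ℝ^N, whose k-th entry is Tr(D·Vᵀℰ_{:,:,k}V) = Σ_{i=1}^r D_{ii}·v_iᵀℰ_{:,:,k}v_i (v_i the i-th column of V), satisfies ‖[ℰ; V, D]‖₂ ≤ √r·‖D‖_F·‖ℰ‖_op. -/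
open scoped BigOperators
open Matrix MeasureTheory

noncomputable section

/-!
For diagonal `D` the `k`-th entry of `[ℰ; V, D]` is `∑ᵢ Dᵢᵢ vᵢᵀ ℰ_{:,:,k} vᵢ`, so the vector is the
combination `∑ᵢ Dᵢᵢ (ℰ ×₁ vᵢ ×₂ vᵢ)`. Each contraction of `ℰ` against the unit column `vᵢ` twice has
norm at most `‖ℰ‖_op` (test it against its own direction), so the triangle inequality bounds the
norm by `(∑ᵢ |Dᵢᵢ|) ‖ℰ‖_op`, and Cauchy–Schwarz gives `∑ᵢ |Dᵢᵢ| ≤ √r ‖D‖_F`.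
-/

section Euclidean

variable {ι : Type*} [Fintype ι]

lemma enorm2_eq_norm_toLp (v : ι → ℝ) : enorm2 v = ‖WithLp.toLp 2 v‖ := by
  simp [enorm2, EuclideanSpace.norm_eq]

lemma enorm2_sq (v : ι → ℝ) : enorm2 v ^ 2 = ∑ i, v i ^ 2 :=
  Real.sq_sqrt (Finset.sum_nonneg fun i _ => sq_nonneg (v i))

lemma abs_le_enorm2 (v : ι → ℝ) (i : ι) : |v i| ≤ enorm2 v := by
  simpa [enorm2_eq_norm_toLp] using PiLp.norm_apply_le (WithLp.toLp 2 v) i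

lemma enorm2_neg (v : ι → ℝ) : enorm2 (-v) = enorm2 v := by
  simp [enorm2]

lemma enorm2_smul (c : ℝ) (v : ι → ℝ) : enorm2 (c • v) = |c| * enorm2 v := by
  simp only [enorm2_eq_norm_toLp, WithLp.toLp_smul, norm_smul, Real.norm_eq_abs]

lemma enorm2_sum_mul_le {κ : Type*} (s : Finset κ) (c : κ → ℝ) (g : κ → ι → ℝ) :
    enorm2 (fun k => ∑ i ∈ s, c i * g i k) ≤ ∑ i ∈ s, |c i| * enorm2 (g i) := by
  have hsum : (fun k => ∑ i ∈ s, c i * g i k) = ∑ i ∈ s, c i • g i := by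
    ext k
    simp [Finset.sum_apply]
  rw [hsum, enorm2_eq_norm_toLp, WithLp.toLp_sum]
  refine (norm_sum_le _ _).trans_eq (Finset.sum_congr rfl fun i _ => ?_)
  rw [← enorm2_eq_norm_toLp, enorm2_smul]

end Euclidean

lemma Orth.enorm2_col {p r : ℕ} {V : Matrix (Fin p) (Fin r) ℝ} (hV : Orth V) (i : Fin r) :
    enorm2 (fun a => V a i) = 1 := by
  have h := congr_fun₂ hV i i
  simp only [Matrix.mul_apply, Matrix.transpose_apply, Matrix.one_apply_eq] at h
  simp [enorm2, sq, h]

lemma sum_abs_diag_le_sqrt_card_mul_frobNorm {n : Type*} [Fintype n] (D : Matrix n n ℝ) :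
    ∑ i, |D i i| ≤ Real.sqrt (Fintype.card n) * frobNorm D :=
  calc ∑ i, |D i i| = ∑ i, 1 * |D i i| := by simp
    _ ≤ Real.sqrt (∑ _i : n, 1 ^ 2) * Real.sqrt (∑ i, |D i i| ^ 2) :=
        Real.sum_mul_le_sqrt_mul_sqrt _ _ _
    _ ≤ Real.sqrt (Fintype.card n) * frobNorm D := by
        simp only [one_pow, Finset.sum_const, Finset.card_univ, nsmul_eq_mul, mul_one, sq_abs,
          frobNorm]
        gcongr with i
        exact Finset.single_le_sum (f := fun j => D i j ^ 2) (fun j _ => sq_nonneg _)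
          (Finset.mem_univ i)

section TensorOpNorm

variable {p q N : ℕ}

/-- `T ×₁ v ×₂ w ∈ ℝ^N`. -/
def contract12 (T : Fin p → Fin q → Fin N → ℝ) (v : Fin p → ℝ) (w : Fin q → ℝ) : Fin N → ℝ :=
  fun k => ∑ i, ∑ j, T i j k * v i * w j

lemma sum_contract12_mul (T : Fin p → Fin q → Fin N → ℝ) (v : Fin p → ℝ) (w : Fin q → ℝ)
    (z : Fin N → ℝ) :
    ∑ i, ∑ j, ∑ k, T i j k * v i * w j * z k = ∑ k, contract12 T v w k * z k := by
  simp only [contract12, Finset.sum_mul]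
  exact (Finset.sum_congr rfl fun i _ => Finset.sum_comm).trans Finset.sum_comm

lemma bddAbove_tOpNorm_set (T : Fin p → Fin q → Fin N → ℝ) :
    BddAbove {x | ∃ (v : Fin p → ℝ) (w : Fin q → ℝ) (z : Fin N → ℝ),
      enorm2 v = 1 ∧ enorm2 w = 1 ∧ enorm2 z = 1 ∧
      x = ∑ i, ∑ j, ∑ k, T i j k * v i * w j * z k} := by
  refine ⟨∑ i, ∑ j, ∑ k, |T i j k|, ?_⟩
  rintro x ⟨v, w, z, hv, hw, hz, rfl⟩
  refine Finset.sum_le_sum fun i _ => Finset.sum_le_sum fun j _ => Finset.sum_le_sum fun k _ => ?_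
  have hvi := hv ▸ abs_le_enorm2 v i
  have hwj := hw ▸ abs_le_enorm2 w j
  have hzk := hz ▸ abs_le_enorm2 z k
  calc T i j k * v i * w j * z k ≤ |T i j k| * |v i| * |w j| * |z k| := by
        simp only [← abs_mul]; exact le_abs_self _
    _ ≤ |T i j k| * 1 * 1 * 1 := by gcongr
    _ = |T i j k| := by ring

lemma le_tOpNorm (T : Fin p → Fin q → Fin N → ℝ) {v : Fin p → ℝ} {w : Fin q → ℝ}
    {z : Fin N → ℝ} (hv : enorm2 v = 1) (hw : enorm2 w = 1) (hz : enorm2 z = 1) :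
    ∑ i, ∑ j, ∑ k, T i j k * v i * w j * z k ≤ tOpNorm T :=
  le_csSup (bddAbove_tOpNorm_set T) ⟨v, w, z, hv, hw, hz, rfl⟩

-- The set is symmetric under `z ↦ -z`, and empty (with `sSup ∅ = 0`) when `p`, `q` or `N` is `0`.
lemma tOpNorm_nonneg (T : Fin p → Fin q → Fin N → ℝ) : 0 ≤ tOpNorm T := by
  obtain hS | ⟨x, v, w, z, hv, hw, hz, rfl⟩ := Set.eq_empty_or_nonempty
    {x | ∃ (v : Fin p → ℝ) (w : Fin q → ℝ) (z : Fin N → ℝ),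
      enorm2 v = 1 ∧ enorm2 w = 1 ∧ enorm2 z = 1 ∧
      x = ∑ i, ∑ j, ∑ k, T i j k * v i * w j * z k}
  · rw [tOpNorm, hS, Real.sSup_empty]
  · have hpos := le_tOpNorm T hv hw hz
    have hneg := le_tOpNorm T hv hw ((enorm2_neg z).trans hz)
    simp only [Pi.neg_apply, mul_neg, Finset.sum_neg_distrib] at hneg
    linarith

lemma enorm2_contract12_le_tOpNorm (T : Fin p → Fin q → Fin N → ℝ) {v : Fin p → ℝ}
    {w : Fin q → ℝ} (hv : enorm2 v = 1) (hw : enorm2 w = 1) :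
    enorm2 (contract12 T v w) ≤ tOpNorm T := by
  set g := contract12 T v w with hg_def
  rcases (show 0 ≤ enorm2 g from Real.sqrt_nonneg _).eq_or_lt with hg | hg
  · rw [← hg]
    exact tOpNorm_nonneg T
  have hz : enorm2 ((enorm2 g)⁻¹ • g) = 1 := by
    rw [enorm2_smul, abs_of_pos (inv_pos.mpr hg), inv_mul_cancel₀ hg.ne']
  have h := le_tOpNorm T hv hw hz
  rw [sum_contract12_mul] at h
  convert h using 1
  rw [← hg_def, eq_comm]
  simp only [Pi.smul_apply, smul_eq_mul, mul_left_comm _ (enorm2 g)⁻¹, ← Finset.mul_sum, ← sq,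
    ← enorm2_sq]
  field_simp

end TensorOpNorm

lemma traceProdD_eq_sum_of_isDiag {p N r : ℕ} (T : Fin p → Fin p → Fin N → ℝ)
    (V : Matrix (Fin p) (Fin r) ℝ) {D : Matrix (Fin r) (Fin r) ℝ} (hD : D.IsDiag) :
    traceProdD T V D = fun k => ∑ i, D i i * contract12 T (fun a => V a i) (fun a => V a i) k := by
  classical
  ext k
  rw [traceProdD, ← hD.diagonal_diag, Matrix.trace]
  refine Finset.sum_congr rfl fun i _ => ?_
  rw [Matrix.diag_apply, Matrix.diagonal_mul]
  simp only [Matrix.diagonal_apply_eq, Matrix.diag_apply, Matrix.mul_apply, Matrix.transpose_apply,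
    tslice, Matrix.of_apply, contract12, Finset.sum_mul, Finset.mul_sum]
  rw [Finset.sum_comm]
  exact Finset.sum_congr rfl fun a _ => Finset.sum_congr rfl fun b _ => by ring

/-- ℓ₂ bound for the weighted trace-product vector:
`‖[ℰ; V, D]‖₂ ≤ √r ‖D‖_F ‖ℰ‖_op` for diagonal `D`. -/
theorem traceProdD_norm_le {p N r : ℕ} (E : Fin p → Fin p → Fin N → ℝ)
    (V : Matrix (Fin p) (Fin r) ℝ) (hV : Orth V)
    (D : Matrix (Fin r) (Fin r) ℝ) (hD : D.IsDiag) :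
    enorm2 (traceProdD E V D) ≤ Real.sqrt r * frobNorm D * tOpNorm E := by
  rw [traceProdD_eq_sum_of_isDiag E V hD]
  calc _ ≤ ∑ i, |D i i| * enorm2 (contract12 E (fun a => V a i) (fun a => V a i)) :=
        enorm2_sum_mul_le _ _ _
    _ ≤ ∑ i, |D i i| * tOpNorm E := by
        gcongr with i
        exact enorm2_contract12_le_tOpNorm E (hV.enorm2_col i) (hV.enorm2_col i)
    _ = (∑ i, |D i i|) * tOpNorm E := by rw [Finset.sum_mul]
    _ ≤ Real.sqrt r * frobNorm D * tOpNorm E := by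
        gcongr
        · exact tOpNorm_nonneg E
        · simpa using sum_abs_diag_le_sqrt_card_mul_frobNorm D

end
end
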